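/- Let $N$ be odd and $r_{N-1,N}(n) = \mathrm{CT}_{X_1,\ldots,X_N}(\sigma_{N-1}(Y_1,\ldots,Y_N))^n$ with $Y_j = X_j + X_j^{-1}$. Then for all $n \ge 0$: $r_{N-1,N}(2n+1) = \sum \binom{2n+1}{2k_1+1,\ldots,2k_N+1} \binom{2(n-k_1)}{n-k_1} \cdots \binom{2(n-k_N)}{n-k_N}$, where the sum is over tuples $(k_1,\ldots,k_N)$ of nonnegative integers with $k_1 + \cdots + k_N = n + \frac{1-N}{2}$. -/

import Mathlib

open Finset

/-- The ring of Laurent polynomials in `N` variables over `ℤ`. -/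
abbrev MvLaurent (N : ℕ) := AddMonoidAlgebra ℤ (Fin N → ℤ)

/-- The Laurent variable `X j`. -/
noncomputable def Xl {N : ℕ} (j : Fin N) : MvLaurent N :=
  AddMonoidAlgebra.single (Pi.single j 1) 1

/-- `Y j = X j + (X j)⁻¹`. -/
noncomputable def Yl {N : ℕ} (j : Fin N) : MvLaurent N :=
  AddMonoidAlgebra.single (Pi.single j (1 : ℤ)) 1 +
    AddMonoidAlgebra.single (Pi.single j (-1 : ℤ)) 1

/-- The constant term (coefficient of `X₁^0 ⋯ X_N^0`). -/
def CT {N : ℕ} (f : MvLaurent N) : ℤ := f.coeff 0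

/-- `σ_M (Y₁, …, Y_N)`, the `M`-th elementary symmetric polynomial evaluated at the `Y`'s. -/
noncomputable def sigmaY (N M : ℕ) : MvLaurent N :=
  ∑ s ∈ Finset.powersetCard M (Finset.univ : Finset (Fin N)), ∏ j ∈ s, Yl j

lemma Yl_pow {N : ℕ} (j : Fin N) (m : ℕ) :
    Yl j ^ m = ∑ t ∈ Finset.range (m + 1),
      AddMonoidAlgebra.single (Pi.single j ((2 * t : ℤ) - m)) (m.choose t : ℤ) := by
  rw [Yl, add_pow]
  refine Finset.sum_congr rfl fun t ht => ?_
  rw [Finset.mem_range] at ht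
  rw [AddMonoidAlgebra.single_pow, AddMonoidAlgebra.single_pow,
    AddMonoidAlgebra.single_mul_single, AddMonoidAlgebra.natCast_def,
    AddMonoidAlgebra.single_mul_single]
  congr 1
  · funext i
    by_cases hij : i = j
    · subst hij
      simp [nsmul_eq_mul]
      omega
    · simp [Pi.single_eq_of_ne hij]
  · simp

lemma prod_single {N : ℕ} (a : Fin N → (Fin N → ℤ)) (c : Fin N → ℤ) :
    (∏ i, (AddMonoidAlgebra.single (a i) (c i) : MvLaurent N)) =
      AddMonoidAlgebra.single (∑ i, a i) (∏ i, c i) := by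
  classical
  induction (Finset.univ : Finset (Fin N)) using Finset.induction with
  | empty => simp [AddMonoidAlgebra.one_def]
  | insert _ _ h ih =>
      rw [Finset.prod_insert h, Finset.prod_insert h, Finset.sum_insert h, ih,
        AddMonoidAlgebra.single_mul_single]

lemma CT_prod_Yl_pow {N : ℕ} (m : Fin N → ℕ) :
    CT (∏ i, Yl i ^ m i) =
      ∏ i, (if Even (m i) then ((m i).choose (m i / 2) : ℤ) else 0) := by
  classical
  simp_rw [Yl_pow]
  rw [Finset.prod_univ_sum]
  simp_rw [prod_single]
  have husp : ∀ v : Fin N → ℤ, (∑ i, Pi.single i (v i)) = v := fun v =>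
    funext fun x => by rw [Finset.sum_apply]; exact Fintype.sum_pi_single x v
  rw [CT, AddMonoidAlgebra.coeff_sum, Finset.sum_apply']
  simp_rw [AddMonoidAlgebra.coeff_single, husp, Finsupp.single_apply]
  have hcond : ∀ p : Fin N → ℕ,
      ((fun i => (2 * (p i) : ℤ) - m i) = (0 : Fin N → ℤ)) ↔ ∀ i, 2 * p i = m i := by
    intro p
    rw [funext_iff]
    constructor
    · intro h i; have := h i; simp at this; omega
    · intro h i; have := h i; simp; omega
  by_cases h : ∀ i, Even (m i)
  · rw [Finset.sum_eq_single (fun i => m i / 2)]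
    · rw [if_pos]
      · exact (Finset.prod_congr rfl fun i _ => by rw [if_pos (h i)]).symm
      · rw [hcond]; intro i; obtain ⟨c, hc⟩ := h i; omega
    · intro p hp hne
      rw [if_neg]
      rw [hcond]
      intro hall
      exact hne (funext fun i => by have := hall i; obtain ⟨c, hc⟩ := h i; omega)
    · intro habs
      exfalso
      exact habs (Fintype.mem_piFinset.2 fun i => Finset.mem_range.2 (by omega))
  · push_neg at h
    obtain ⟨i0, hi0⟩ := h
    rw [Finset.sum_eq_zero, Finset.prod_eq_zero (Finset.mem_univ i0) (by rw [if_neg hi0])]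
    intro p hp
    rw [if_neg]
    rw [hcond]
    intro hall
    exact hi0 ⟨p i0, by have := hall i0; omega⟩

lemma sigmaY_eq {N : ℕ} (hN : 1 ≤ N) :
    sigmaY N (N - 1) = ∑ j : Fin N, ∏ i ∈ Finset.univ.erase j, Yl i := by
  classical
  have himg : Finset.powersetCard (N - 1) (Finset.univ : Finset (Fin N)) =
      Finset.image (fun j => Finset.univ.erase j) Finset.univ := by
    ext s
    simp only [Finset.mem_powersetCard_univ, Finset.mem_image, Finset.mem_univ, true_and]
    constructor
    · intro hs
      have hc : sᶜ.card = 1 := by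
        rw [Finset.card_compl, hs, Fintype.card_fin]
        omega
      obtain ⟨j, hj⟩ := Finset.card_eq_one.1 hc
      refine ⟨j, ?_⟩
      rw [← compl_compl s, hj, Finset.compl_singleton]
    · rintro ⟨j, rfl⟩
      rw [Finset.card_erase_of_mem (Finset.mem_univ j), Finset.card_univ, Fintype.card_fin]
  rw [sigmaY, himg, Finset.sum_image]
  intro j _ j' _ h
  by_contra hne
  have : j ∈ Finset.univ.erase j' := Finset.mem_erase.2 ⟨hne, Finset.mem_univ j⟩
  beta_reduce at h
  rw [← h] at this
  exact Finset.notMem_erase j _ this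

lemma prod_swap_Yl {N : ℕ} (m : Fin N → ℕ) :
    (∏ j : Fin N, (∏ i ∈ Finset.univ.erase j, Yl i) ^ m j) =
      ∏ i : Fin N, Yl i ^ (∑ j ∈ Finset.univ.erase i, m j) := by
  classical
  simp_rw [← Finset.prod_pow]
  rw [Finset.prod_comm' (s' := fun i => Finset.univ.erase i) (t' := Finset.univ)]
  · exact Finset.prod_congr rfl fun i _ => Finset.prod_pow_eq_pow_sum _ _ _
  · intro x y
    simp [Finset.mem_erase, eq_comm, and_comm]

theorem heracles_odd_sum_formula (N : ℕ) (hN : Odd N) (n : ℕ) :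
    CT ((sigmaY N (N - 1)) ^ (2 * n + 1)) =
      ∑ k ∈ (Fintype.piFinset fun _ : Fin N => Finset.range (n + 1)).filter
          (fun k => ∑ i, (k i : ℤ) = (n : ℤ) + (1 - (N : ℤ)) / 2),
        (Nat.multinomial Finset.univ (fun i => 2 * k i + 1) : ℤ) *
          ∏ i, ((2 * (n - k i)).choose (n - k i) : ℤ) := by
  classical
  obtain ⟨a, ha⟩ := hN
  have hN1 : 1 ≤ N := by omega
  have hNcast : (N : ℤ) = 2 * a + 1 := by rw [ha]; push_cast; ring
  rw [sigmaY_eq hN1, Finset.sum_pow_eq_sum_piAntidiag]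
  have hCT_sum : ∀ (s : Finset (Fin N → ℕ)) (f : (Fin N → ℕ) → MvLaurent N),
      CT (∑ m ∈ s, f m) = ∑ m ∈ s, CT (f m) := fun s f => by
    rw [CT, AddMonoidAlgebra.coeff_sum, Finset.sum_apply']; rfl
  rw [hCT_sum]
  have hCT_mul : ∀ (c : ℕ) (f : MvLaurent N), CT ((c : MvLaurent N) * f) = c * CT f := by
    intro c f
    rw [CT, CT, AddMonoidAlgebra.natCast_def, AddMonoidAlgebra.coeff_single_zero_mul]
  have hterm : ∀ m ∈ Finset.piAntidiag Finset.univ (2 * n + 1),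
      CT ((Nat.multinomial Finset.univ m : MvLaurent N) *
          ∏ j, (∏ i ∈ Finset.univ.erase j, Yl i) ^ m j) =
        (Nat.multinomial Finset.univ m : ℤ) *
          ∏ i, (if Even (2 * n + 1 - m i) then
            (((2 * n + 1 - m i)).choose ((2 * n + 1 - m i) / 2) : ℤ) else 0) := by
    intro m hm
    rw [Finset.mem_piAntidiag] at hm
    have hsum : (∑ x, m x) = 2 * n + 1 := hm.1
    rw [hCT_mul, prod_swap_Yl]
    have he : ∀ i : Fin N, (∑ j ∈ Finset.univ.erase i, m j) = 2 * n + 1 - m i := by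
      intro i
      have h1 : (∑ j ∈ Finset.univ.erase i, m j) + m i = ∑ x, m x :=
        Finset.sum_erase_add Finset.univ m (Finset.mem_univ i)
      omega
    simp_rw [he]
    rw [CT_prod_Yl_pow]
  rw [Finset.sum_congr rfl hterm]
  rw [← Finset.sum_subset
    (Finset.filter_subset (fun m => ∀ i, Odd (m i)) (Finset.piAntidiag Finset.univ (2 * n + 1)))
    (by
      intro m hm hnm
      rw [Finset.mem_filter] at hnm
      have hodd' : ∃ i, ¬ Odd (m i) := by
        by_contra hcon
        push_neg at hcon
        exact hnm ⟨hm, hcon⟩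
      rw [Finset.mem_piAntidiag] at hm
      obtain ⟨i0, hi0⟩ := hodd'
      have hsum : (∑ x, m x) = 2 * n + 1 := hm.1
      have hle : m i0 ≤ 2 * n + 1 := by
        rw [← hsum]
        exact Finset.single_le_sum (fun _ _ => Nat.zero_le _) (Finset.mem_univ i0)
      rw [Nat.odd_iff] at hi0
      have hnev : ¬ Even (2 * n + 1 - m i0) := by
        rw [Nat.even_iff]
        omega
      have h0 : (∏ i : Fin N, if Even (2 * n + 1 - m i) then
          (((2 * n + 1 - m i)).choose ((2 * n + 1 - m i) / 2) : ℤ) else 0) = 0 :=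
        Finset.prod_eq_zero (Finset.mem_univ i0) (if_neg hnev)
      rw [h0, mul_zero])]
  refine Finset.sum_nbij' (fun m x => m x / 2) (fun k x => 2 * k x + 1) ?_ ?_ ?_ ?_ ?_
  · intro m hm
    rw [Finset.mem_filter] at hm
    obtain ⟨hm1, hodd⟩ := hm
    rw [Finset.mem_piAntidiag] at hm1
    have hsum : (∑ x, m x) = 2 * n + 1 := hm1.1
    have hle : ∀ i, m i ≤ 2 * n + 1 := fun i => by
      rw [← hsum]
      exact Finset.single_le_sum (fun _ _ => Nat.zero_le _) (Finset.mem_univ i)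
    rw [Finset.mem_filter]
    constructor
    · refine Fintype.mem_piFinset.2 fun i => Finset.mem_range.2 ?_
      show m i / 2 < n + 1
      have := hle i
      omega
    · show (∑ i, ((m i / 2 : ℕ) : ℤ)) = (n : ℤ) + (1 - (N : ℤ)) / 2
      have hsplit : (∑ x, m x) = 2 * (∑ i, m i / 2) + N := by
        have h1 : (∑ x, m x) = ∑ i, (2 * (m i / 2) + 1) :=
          Finset.sum_congr rfl fun i _ => by
            have := Nat.odd_iff.1 (hodd i); omega
        rw [h1, Finset.sum_add_distrib, Finset.sum_const, smul_eq_mul, mul_one,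
          Finset.card_univ, Fintype.card_fin, ← Finset.mul_sum]
      have hKZ : (∑ i, ((m i / 2 : ℕ) : ℤ)) = ((∑ i, m i / 2 : ℕ) : ℤ) := by
        push_cast; ring
      rw [hKZ]
      omega
  · intro k hk
    rw [Finset.mem_filter] at hk
    obtain ⟨hk1, hkz⟩ := hk
    have hkle : ∀ i, k i ≤ n := fun i =>
      Nat.lt_succ_iff.1 (Finset.mem_range.1 (Fintype.mem_piFinset.1 hk1 i))
    have hKZ : (∑ i, ((k i : ℕ) : ℤ)) = ((∑ i, k i : ℕ) : ℤ) := by push_cast; ring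
    rw [hKZ] at hkz
    rw [Finset.mem_filter]
    constructor
    · refine Finset.mem_piAntidiag.2 ⟨?_, fun i _ => Finset.mem_univ i⟩
      show (∑ i, (2 * k i + 1)) = 2 * n + 1
      rw [Finset.sum_add_distrib, Finset.sum_const, smul_eq_mul, mul_one,
        Finset.card_univ, Fintype.card_fin, ← Finset.mul_sum]
      omega
    · intro i
      show Odd (2 * k i + 1)
      exact ⟨k i, by omega⟩
  · intro m hm
    rw [Finset.mem_filter] at hm
    funext x
    show 2 * (m x / 2) + 1 = m x
    have := Nat.odd_iff.1 (hm.2 x)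
    omega
  · intro k hk
    funext x
    show (2 * k x + 1) / 2 = k x
    omega
  · intro m hm
    rw [Finset.mem_filter] at hm
    obtain ⟨hm1, hodd⟩ := hm
    rw [Finset.mem_piAntidiag] at hm1
    have hsum : (∑ x, m x) = 2 * n + 1 := hm1.1
    have hle : ∀ i, m i ≤ 2 * n + 1 := fun i => by
      rw [← hsum]
      exact Finset.single_le_sum (fun _ _ => Nat.zero_le _) (Finset.mem_univ i)
    beta_reduce
    congr 1
    · congr 1
      exact Nat.multinomial_congr fun i _ => by
        have := Nat.odd_iff.1 (hodd i); omega
    · refine Finset.prod_congr rfl fun i _ => ?_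
      have ho := Nat.odd_iff.1 (hodd i)
      have hli := hle i
      have h2 : (2 * n + 1 - m i) / 2 = n - m i / 2 := by omega
      have h1 : 2 * n + 1 - m i = 2 * (n - m i / 2) := by omega
      rw [if_pos (by rw [Nat.even_iff]; omega), h2, h1]
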